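/- Let d ≥ 1 and let K ⊆ [0,1]^d be convex and downward-closed with 0 ∈ K. Let L ≥ 1 be an integer, let v_1, …, v_L ∈ K, and define x_1 = 0 and x_{k+1} = x_k + (1/L)·v_k ⊙ (1 − x_k) for k = 1, …, L. Then x_k ∈ K for every k ∈ {1, …, L+1}. -/

import Mathlib

open MeasureTheory Finset

noncomputable section

/-- The unit cube `[0,1]^d` in `ℝ^d` (with Euclidean structure). -/
def cube (d : ℕ) : Set (EuclideanSpace ℝ (Fin d)) :=
  {x | ∀ i, x i ∈ Set.Icc (0 : ℝ) 1}

/-- Coordinatewise (Hadamard) product on `ℝ^d`. -/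
def had {d : ℕ} (x y : EuclideanSpace ℝ (Fin d)) : EuclideanSpace ℝ (Fin d) :=
  WithLp.toLp 2 (fun i => x i * y i)

/-- The all-ones vector in `ℝ^d`. -/
def onesV (d : ℕ) : EuclideanSpace ℝ (Fin d) := WithLp.toLp 2 (fun _ => 1)

/-- `K ⊆ ℝ^d` is downward closed (relative to the nonnegative orthant): together with any
`y ∈ K` it contains every `x` with `0 ≤ x ≤ y` coordinatewise. -/
def DownwardClosed (d : ℕ) (K : Set (EuclideanSpace ℝ (Fin d))) : Prop :=
  ∀ y ∈ K, ∀ x : EuclideanSpace ℝ (Fin d), (∀ i, 0 ≤ x i) → (∀ i, x i ≤ y i) → x ∈ K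

/-- `f` is continuous DR-submodular on the unit cube `[0,1]^d`. -/
def DRSubmodularOn (d : ℕ) (f : EuclideanSpace ℝ (Fin d) → ℝ) : Prop :=
  ∀ x y : EuclideanSpace ℝ (Fin d), x ∈ cube d → y ∈ cube d → (∀ i, x i ≤ y i) →
    ∀ (j : Fin d) (z : ℝ), 0 ≤ z →
      x + z • EuclideanSpace.single j (1 : ℝ) ∈ cube d →
      y + z • EuclideanSpace.single j (1 : ℝ) ∈ cube d →
      f (y + z • EuclideanSpace.single j (1 : ℝ)) - f y ≤
        f (x + z • EuclideanSpace.single j (1 : ℝ)) - f x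

/-! Writing `u_k = v_k ⊙ (1 - x_k)`, the recursion reads `x_{k+1} = x_k + u_k / L`, and downward
closure puts `u_k` in `K` as soon as `x_k ∈ K ⊆ [0,1]^d`. Since `(s + t) • K = s • K + t • K` for
convex `K` and `s, t ≥ 0`, induction gives `x_k ∈ ((k - 1) / L) • K`, which lies in `K` because
`0 ∈ K` and `(k - 1) / L ≤ 1`. -/

open scoped Pointwise

section Increments

variable {E : Type*} [AddCommGroup E] [Module ℝ E] {K : Set E}

theorem Convex.mem_natCast_mul_smul_of_steps (hK : Convex ℝ K) (h0 : (0 : E) ∈ K) {c : ℝ}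
    (hc : 0 ≤ c) {N : ℕ} (hN : N * c ≤ 1) {x : ℕ → E} (hx0 : x 0 = 0)
    (hstep : ∀ n < N, x n ∈ K → ∃ u ∈ K, x (n + 1) = x n + c • u) :
    ∀ n ≤ N, x n ∈ ((n : ℝ) * c) • K := by
  intro n hn
  induction n with
  | zero => simp [hx0, Set.zero_smul_set ⟨0, h0⟩]
  | succ n ih =>
    obtain ⟨y, hy, hxy⟩ := ih (by omega)
    have hnc : (n : ℝ) * c ≤ 1 :=
      le_trans (mul_le_mul_of_nonneg_right (by exact_mod_cast (by omega : n ≤ N)) hc) hN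
    have hxK : x n ∈ K := hxy ▸ (hK.starConvex h0).smul_mem hy (by positivity) hnc
    obtain ⟨u, hu, hxu⟩ := hstep n (by omega) hxK
    rw [Nat.cast_succ, add_one_mul, hK.add_smul (by positivity) hc, hxu]
    exact Set.add_mem_add ⟨y, hy, hxy⟩ (Set.smul_mem_smul_set hu)

theorem Convex.mem_of_steps (hK : Convex ℝ K) (h0 : (0 : E) ∈ K) {c : ℝ} (hc : 0 ≤ c) {N : ℕ}
    (hN : N * c ≤ 1) {x : ℕ → E} (hx0 : x 0 = 0)
    (hstep : ∀ n < N, x n ∈ K → ∃ u ∈ K, x (n + 1) = x n + c • u) :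
    ∀ n ≤ N, x n ∈ K := by
  intro n hn
  obtain ⟨y, hy, hxy⟩ := hK.mem_natCast_mul_smul_of_steps h0 hc hN hx0 hstep n hn
  exact hxy ▸ (hK.starConvex h0).smul_mem hy (by positivity)
    (le_trans (mul_le_mul_of_nonneg_right (by exact_mod_cast hn) hc) hN)

end Increments

theorem onesV_sub_mem_cube {d : ℕ} {x : EuclideanSpace ℝ (Fin d)} (hx : x ∈ cube d) :
    onesV d - x ∈ cube d := fun i => by
  simp only [onesV, PiLp.sub_apply, Set.mem_Icc, sub_nonneg, tsub_le_iff_right,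
    le_add_iff_nonneg_right]
  exact ⟨(hx i).2, (hx i).1⟩

theorem DownwardClosed.had_mem {d : ℕ} {K : Set (EuclideanSpace ℝ (Fin d))}
    (hK : DownwardClosed d K) {v w : EuclideanSpace ℝ (Fin d)} (hv : v ∈ K) (hvc : v ∈ cube d)
    (hw : w ∈ cube d) : had v w ∈ K :=
  hK v hv _ (fun i => mul_nonneg (hvc i).1 (hw i).1)
    (fun i => mul_le_of_le_one_right (hvc i).1 (hw i).2)

theorem frank_wolfe_iterates_feasible_general
    (d : ℕ)
    (K : Set (EuclideanSpace ℝ (Fin d))) (hKcvx : Convex ℝ K) (hKX : K ⊆ cube d)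
    (h0K : (0 : EuclideanSpace ℝ (Fin d)) ∈ K) (hdc : DownwardClosed d K)
    (L : ℕ)
    (v : ℕ → EuclideanSpace ℝ (Fin d)) (hv : ∀ k, 1 ≤ k → k ≤ L → v k ∈ K)
    (x : ℕ → EuclideanSpace ℝ (Fin d))
    (hx1 : x 1 = 0)
    (hrec : ∀ k, 1 ≤ k → k ≤ L →
      x (k + 1) = x k + (L : ℝ)⁻¹ • had (v k) (onesV d - x k)) :
    ∀ k, 1 ≤ k → k ≤ L + 1 → x k ∈ K := by
  have hstep : ∀ n < L, x (n + 1) ∈ K →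
      ∃ u ∈ K, x (n + 1 + 1) = x (n + 1) + (L : ℝ)⁻¹ • u := fun n hn hxK =>
    have hvK := hv (n + 1) (by omega) hn
    ⟨_, hdc.had_mem hvK (hKX hvK) (onesV_sub_mem_cube (hKX hxK)), hrec _ (by omega) hn⟩
  rintro (_ | n) hn1 hnL
  · omega
  · exact hKcvx.mem_of_steps h0K (by positivity) mul_inv_le_one hx1 hstep n (by omega)

/-- Lemma 4 of Zhang et al.: the Frank–Wolfe style iterates
`x_1 = 0`, `x_{k+1} = x_k + (1/L) v_k ⊙ (1 - x_k)` with `v_k ∈ K` stay in the convex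
downward-closed set `K ⊆ [0,1]^d` containing `0`. -/
theorem frank_wolfe_iterates_feasible
    (d : ℕ) (hd : 1 ≤ d)
    (K : Set (EuclideanSpace ℝ (Fin d))) (hKcvx : Convex ℝ K) (hKX : K ⊆ cube d)
    (h0K : (0 : EuclideanSpace ℝ (Fin d)) ∈ K) (hdc : DownwardClosed d K)
    (L : ℕ) (hL : 1 ≤ L)
    (v : ℕ → EuclideanSpace ℝ (Fin d)) (hv : ∀ k, 1 ≤ k → k ≤ L → v k ∈ K)
    (x : ℕ → EuclideanSpace ℝ (Fin d))
    (hx1 : x 1 = 0)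
    (hrec : ∀ k, 1 ≤ k → k ≤ L →
      x (k + 1) = x k + (L : ℝ)⁻¹ • had (v k) (onesV d - x k)) :
    ∀ k, 1 ≤ k → k ≤ L + 1 → x k ∈ K :=
  frank_wolfe_iterates_feasible_general d K hKcvx hKX h0K hdc L v hv x hx1 hrec
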